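/- The space I₁ of canonically integrable functions over a pre-integration space is complete with respect to the 1-norm: every Cauchy sequence Γ : ℕ → I₁ (with a strictly increasing modulus M such that ∫|Γ(n) − Γ(m)| ≤ 2^{-p} for all n, m ≥ M(p)) converges in 1-norm to some α ∈ I₁, with an explicit modulus of convergence. -/

import Mathlib

open Filter Topology

/-- A pre-integration space `(X, I, Λ, ∫)`: an inhabited set `X` with an
apartness relation, an `I`-set `Λ` of real-valued partial functions on `X`
(each index `i` has a domain `dom i` and a function `f i`, and equal partial
functions have equal indices), operations on `I` realizing scalar
multiplication, addition, absolute value and min-with-1 of the partial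
functions, and a functional `∫ = integ : I → ℝ` satisfying (PIS1)–(PIS4). -/
structure PreIntegrationSpace (X I : Type*) where
  inhab : Nonempty X
  apart : X → X → Prop
  apart_irrefl : ∀ x y : X, x = y → apart x y → False
  apart_symm : ∀ x y : X, apart x y → apart y x
  apart_cotrans : ∀ x y : X, apart x y → ∀ z : X, apart x z ∨ apart y z
  dom : I → Set X
  f : I → X → ℝ
  lam_set : ∀ i j : I, dom i = dom j → (∀ x ∈ dom i, f i x = f j x) → i = j
  smul : ℝ → I → I
  add : I → I → I
  abs : I → I
  min1 : I → I
  integ : I → ℝ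
  dom_smul : ∀ a i, dom (smul a i) = dom i
  f_smul : ∀ a i, ∀ x ∈ dom i, f (smul a i) x = a * f i x
  dom_add : ∀ i j, dom (add i j) = dom i ∩ dom j
  f_add : ∀ i j, ∀ x ∈ dom i ∩ dom j, f (add i j) x = f i x + f j x
  dom_abs : ∀ i, dom (abs i) = dom i
  f_abs : ∀ i, ∀ x ∈ dom i, f (abs i) x = |f i x|
  dom_min1 : ∀ i, dom (min1 i) = dom i
  f_min1 : ∀ i, ∀ x ∈ dom i, f (min1 i) x = min (f i x) 1
  pis1 : ∀ (a b : ℝ) (i j : I),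
    integ (add (smul a i) (smul b j)) = a * integ i + b * integ j
  pis2 : ∀ (i : I) (α : ℕ → I) (ℓ : ℝ),
    (∀ m, ∀ x ∈ dom (α m), 0 ≤ f (α m) x) →
    Tendsto (fun n => ∑ k ∈ Finset.range n, integ (α k)) atTop (𝓝 ℓ) →
    ℓ < integ i →
    ∃ x, x ∈ dom i ∧ (∀ n, x ∈ dom (α n)) ∧
      ∃ ℓ' : ℝ, Tendsto (fun n => ∑ k ∈ Finset.range n, f (α k) x) atTop (𝓝 ℓ') ∧
        ℓ' < f i x
  pis3 : ∃ i : I, integ i = 1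
  pis4 : ∀ i : I,
    Tendsto (fun m : ℕ => integ (smul (m : ℝ) (min1 (smul ((m : ℝ))⁻¹ i))))
      atTop (𝓝 (integ i)) ∧
    Tendsto (fun m : ℕ => integ (smul ((m : ℝ))⁻¹ (min1 (smul (m : ℝ) (abs i)))))
      atTop (𝓝 0)

variable {X I : Type*}

/-- Partial sums in the index set: `psum P α N = α(0) + ⋯ + α(N)`. -/
def psum (P : PreIntegrationSpace X I) (α : ℕ → I) : ℕ → I
  | 0 => α 0
  | n + 1 => P.add (psum P α n) (α (n + 1))

/-- `α : ℕ → I` is a representation, i.e. a member of `I₁`: the series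
`∑_n ∫|α(n)|` converges. -/
def InI1 (P : PreIntegrationSpace X I) (α : ℕ → I) : Prop :=
  ∃ L : ℝ,
    Tendsto (fun N => ∑ k ∈ Finset.range N, P.integ (P.abs (α k))) atTop (𝓝 L)

/-- The domain of the canonically integrable function represented by `α`:
the points of `⋂_n dom f_{α(n)}` where `∑_n |f_{α(n)}(x)|` converges. -/
def dom1 (P : PreIntegrationSpace X I) (α : ℕ → I) : Set X :=
  {x | (∀ n, x ∈ P.dom (α n)) ∧
    ∃ s : ℝ,
      Tendsto (fun N => ∑ k ∈ Finset.range N, |P.f (α k) x|) atTop (𝓝 s)}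

/-- The canonically integrable function represented by `α`:
`g_α(x) = ∑_n f_{α(n)}(x)`. -/
noncomputable def g1 (P : PreIntegrationSpace X I) (α : ℕ → I) (x : X) : ℝ :=
  ∑' n, P.f (α n) x

/-- `L` is the `1`-norm `∫|α| = lim_N ∫|∑_{k≤N} α(k)|` of `α ∈ I₁`. -/
def Norm1Is (P : PreIntegrationSpace X I) (α : ℕ → I) (L : ℝ) : Prop :=
  Tendsto (fun N => P.integ (P.abs (psum P α N))) atTop (𝓝 L)

/-- Addition in `I₁` by interleaving two representations. -/
def addSeq (P : PreIntegrationSpace X I) (α β : ℕ → I) : ℕ → I :=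
  fun m => if m % 2 = 0 then α (m / 2) else β (m / 2)

/-- Negation of a representation, termwise. -/
def negSeq (P : PreIntegrationSpace X I) (β : ℕ → I) : ℕ → I :=
  fun m => P.smul (-1) (β m)

/-- Subtraction `α − β` of representations. -/
def subSeq (P : PreIntegrationSpace X I) (α β : ℕ → I) : ℕ → I :=
  addSeq P α (negSeq P β)

/-! Pass to the subsequence `G p = Γ (M p)` and truncate each `G p` to a finite partial sum
`S p`, a single element of `I`, whose discarded tail has `∑ ∫|·| ≤ 2⁻ᵖ`. The limit `α` is the
telescoping sequence `S 0, S 1 - S 0, S 2 - S 1, …`: its `K`-th partial sum equals `S K` wherever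
it is defined, and `∫|S (p+1) - S p| ≤ ‖G (p+1) - G p‖₁ + 2 · 2⁻ᵖ`, so `α ∈ I₁`. Comparing the
`K`-th partial sums of `α` and `Γ n` bounds `‖α - Γ n‖₁` by `‖G K - Γ n‖₁` plus two tails that
vanish as `K → ∞`, hence by `2⁻ᵠ` once `n ≥ M q`.

Every estimate comes from monotonicity of `∫`, which only compares integrands on the common
domain, so identities between partial functions are only needed where all of them are defined. -/

namespace PreIntegrationSpace

variable (P : PreIntegrationSpace X I)

def sub (i j : I) : I := P.add i (P.smul (-1) j)

lemma mem_dom_add {i j : I} {x : X} : x ∈ P.dom (P.add i j) ↔ x ∈ P.dom i ∧ x ∈ P.dom j := by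
  rw [P.dom_add]; rfl

lemma mem_dom_sub {i j : I} {x : X} : x ∈ P.dom (P.sub i j) ↔ x ∈ P.dom i ∧ x ∈ P.dom j := by
  rw [sub, P.dom_add, P.dom_smul]; rfl

lemma f_sub {i j : I} {x : X} (hi : x ∈ P.dom i) (hj : x ∈ P.dom j) :
    P.f (P.sub i j) x = P.f i x - P.f j x := by
  rw [sub, P.f_add _ _ x ⟨hi, (P.dom_smul _ _).symm ▸ hj⟩, P.f_smul _ _ x hj]
  ring

lemma smul_one (i : I) : P.smul 1 i = i :=
  P.lam_set _ _ (P.dom_smul 1 i) fun x hx => by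
    rw [P.dom_smul] at hx
    rw [P.f_smul 1 i x hx, one_mul]

lemma abs_smul_neg_one (i : I) : P.abs (P.smul (-1) i) = P.abs i := by
  refine P.lam_set _ _ (by rw [P.dom_abs, P.dom_smul, P.dom_abs]) fun x hx => ?_
  rw [P.dom_abs, P.dom_smul] at hx
  rw [P.f_abs _ x ((P.dom_smul _ _).symm ▸ hx), P.f_smul _ i x hx, P.f_abs i x hx, neg_one_mul,
    abs_neg]

lemma integ_add (i j : I) : P.integ (P.add i j) = P.integ i + P.integ j := by
  simpa [smul_one] using P.pis1 1 1 i j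

lemma integ_sub (i j : I) : P.integ (P.sub i j) = P.integ i - P.integ j := by
  simpa [sub, smul_one, sub_eq_add_neg] using P.pis1 1 (-1) i j

lemma integ_sub_self (i : I) : P.integ (P.sub i i) = 0 := by
  rw [integ_sub, sub_self]

-- (PIS2) applied to the zero series: a positive integral is witnessed by a point where the
-- integrand is positive.
lemma integ_mono {i j : I} (h : ∀ x ∈ P.dom i, x ∈ P.dom j → P.f i x ≤ P.f j x) :
    P.integ i ≤ P.integ j := by
  by_contra! hlt
  have hzero : ∀ x ∈ P.dom (P.sub i i), P.f (P.sub i i) x = 0 := fun x hx => by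
    rw [P.mem_dom_sub] at hx
    rw [P.f_sub hx.1 hx.2, sub_self]
  obtain ⟨x, hx, -, ℓ, hℓ, hpos⟩ := P.pis2 (P.sub i j) (fun _ => P.sub i i) 0
    (fun _ x hx => (hzero x hx).ge)
    (by simp [integ_sub_self])
    (by rw [integ_sub]; linarith)
  rw [P.mem_dom_sub] at hx
  have hℓ0 : ℓ = 0 := by
    refine tendsto_nhds_unique hℓ ?_
    simp [hzero x (P.mem_dom_sub.2 ⟨hx.1, hx.1⟩)]
  rw [P.f_sub hx.1 hx.2, hℓ0] at hpos
  linarith [h x hx.1 hx.2]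

lemma integ_abs_le {i j : I} (h : ∀ x ∈ P.dom i, x ∈ P.dom j → |P.f i x| ≤ P.f j x) :
    P.integ (P.abs i) ≤ P.integ j :=
  P.integ_mono fun x hx hxj => by
    rw [P.dom_abs] at hx
    rw [P.f_abs i x hx]
    exact h x hx hxj

lemma integ_abs_nonneg (i : I) : 0 ≤ P.integ (P.abs i) := by
  rw [← P.integ_sub_self (P.abs i)]
  refine P.integ_mono fun x hx hx' => ?_
  rw [P.mem_dom_sub] at hx
  rw [P.f_sub hx.1 hx.1, sub_self, P.f_abs i x ((P.dom_abs i) ▸ hx')]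
  exact abs_nonneg _

lemma integ_abs_sub_self (i : I) : P.integ (P.abs (P.sub i i)) = 0 := by
  refine le_antisymm ?_ (P.integ_abs_nonneg _)
  rw [← P.integ_sub_self i]
  refine P.integ_abs_le fun x hx _ => ?_
  rw [P.mem_dom_sub] at hx
  rw [P.f_sub hx.1 hx.1, sub_self, abs_zero]

lemma integ_abs_le_of_eq {i j : I} (h : ∀ x ∈ P.dom i, x ∈ P.dom j → P.f i x = P.f j x) :
    P.integ (P.abs i) ≤ P.integ (P.abs j) :=
  P.integ_abs_le fun x hx hxj => by
    rw [P.dom_abs] at hxj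
    rw [h x hx hxj, P.f_abs j x hxj]

lemma integ_abs_le_add_of_eq {i j k : I}
    (h : ∀ x ∈ P.dom i, x ∈ P.dom j → x ∈ P.dom k → P.f i x = P.f j x + P.f k x) :
    P.integ (P.abs i) ≤ P.integ (P.abs j) + P.integ (P.abs k) := by
  rw [← P.integ_add]
  refine P.integ_abs_le fun x hx hxjk => ?_
  rw [P.dom_add, P.dom_abs, P.dom_abs] at hxjk
  rw [h x hx hxjk.1 hxjk.2, P.f_add _ _ x ((P.dom_abs j).symm ▸ (P.dom_abs k).symm ▸ hxjk),
    P.f_abs j x hxjk.1, P.f_abs k x hxjk.2]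
  exact abs_add_le _ _

lemma integ_abs_sub_le (i j : I) :
    P.integ (P.abs (P.sub i j)) ≤ P.integ (P.abs i) + P.integ (P.abs j) := by
  rw [← P.abs_smul_neg_one j]
  exact P.integ_abs_le_add_of_eq fun x hx _ _ => by
    rw [P.mem_dom_sub] at hx
    rw [P.f_sub hx.1 hx.2, P.f_smul _ _ x hx.2]
    ring

lemma abs_integ_abs_sub_integ_abs_le (i j : I) :
    |P.integ (P.abs i) - P.integ (P.abs j)| ≤ P.integ (P.abs (P.sub i j)) := by
  have hi : P.integ (P.abs i) ≤ P.integ (P.abs j) + P.integ (P.abs (P.sub i j)) :=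
    P.integ_abs_le_add_of_eq fun x _ _ hij => by
      rw [P.mem_dom_sub] at hij
      rw [P.f_sub hij.1 hij.2]
      ring
  have hj : P.integ (P.abs j) ≤ P.integ (P.abs i) + P.integ (P.abs (P.smul (-1) (P.sub i j))) :=
    P.integ_abs_le_add_of_eq fun x _ _ hij => by
      rw [P.dom_smul, P.mem_dom_sub] at hij
      rw [P.f_smul _ _ x (P.mem_dom_sub.2 hij), P.f_sub hij.1 hij.2]
      ring
  rw [P.abs_smul_neg_one] at hj
  exact abs_sub_le_iff.2 ⟨by linarith, by linarith⟩

lemma subSeq_two_mul (a b : ℕ → I) (k : ℕ) : subSeq P a b (2 * k) = a k := by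
  simp [subSeq, addSeq]

lemma subSeq_two_mul_add_one (a b : ℕ → I) (k : ℕ) :
    subSeq P a b (2 * k + 1) = P.smul (-1) (b k) := by
  simp [subSeq, addSeq, negSeq, Nat.add_mod, Nat.add_div]

lemma psum_subSeq (a b : ℕ → I) :
    ∀ H : ℕ, psum P (subSeq P a b) (2 * H + 1) = P.sub (psum P a H) (psum P b H)
  | 0 => by simp [psum, subSeq, addSeq, negSeq, sub]
  | H + 1 => by
    have hunfold : psum P (subSeq P a b) (2 * (H + 1) + 1) =
        P.add (P.add (psum P (subSeq P a b) (2 * H + 1)) (a (H + 1)))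
          (P.smul (-1) (b (H + 1))) := by
      rw [← subSeq_two_mul P a b (H + 1), ← subSeq_two_mul_add_one]; rfl
    rw [hunfold, psum_subSeq a b H]
    refine P.lam_set _ _ ?_ fun x hx => ?_
    · simp only [sub, psum, P.dom_add, P.dom_smul]
      ext x; simp only [Set.mem_inter_iff]; tauto
    · simp only [sub, P.dom_add, P.dom_smul, Set.mem_inter_iff] at hx
      obtain ⟨⟨⟨hA, hB⟩, ha⟩, hb⟩ := hx
      have hAB := P.mem_dom_sub.2 ⟨hA, hB⟩
      have hb' : x ∈ P.dom (P.smul (-1) (b (H + 1))) := (P.dom_smul _ _).symm ▸ hb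
      rw [P.f_add _ _ x ⟨P.mem_dom_add.2 ⟨hAB, ha⟩, hb'⟩, P.f_add _ _ x ⟨hAB, ha⟩, P.f_sub hA hB,
        P.f_smul _ _ x hb, psum, psum,
        P.f_sub (P.mem_dom_add.2 ⟨hA, ha⟩) (P.mem_dom_add.2 ⟨hB, hb⟩), P.f_add _ _ x ⟨hA, ha⟩, P.f_add _ _ x ⟨hB, hb⟩]
      ring

lemma summable_subSeq {a b : ℕ → I} (ha : Summable fun k => P.integ (P.abs (a k)))
    (hb : Summable fun k => P.integ (P.abs (b k))) :
    Summable fun k => P.integ (P.abs (subSeq P a b k)) := by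
  refine Summable.even_add_odd ?_ ?_
  · simpa only [subSeq_two_mul] using ha
  · simpa only [subSeq_two_mul_add_one, abs_smul_neg_one] using hb

lemma inI1_iff_summable {a : ℕ → I} :
    InI1 P a ↔ Summable fun k => P.integ (P.abs (a k)) :=
  ⟨fun ⟨_, hL⟩ =>
    ((hasSum_iff_tendsto_nat_of_nonneg (fun _ => P.integ_abs_nonneg _) _).2 hL).summable,
    fun h => ⟨_, h.hasSum.tendsto_sum_nat⟩⟩

noncomputable def absTail (a : ℕ → I) (N : ℕ) : ℝ := ∑' k, P.integ (P.abs (a (k + N)))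

lemma tendsto_absTail (a : ℕ → I) : Tendsto (P.absTail a) atTop (𝓝 0) :=
  tendsto_sum_nat_add fun k => P.integ (P.abs (a k))

lemma integ_abs_sub_psum_add_le (a : ℕ → I) (m : ℕ) :
    ∀ j : ℕ, P.integ (P.abs (P.sub (psum P a (m + j)) (psum P a m))) ≤
      ∑ k ∈ Finset.range j, P.integ (P.abs (a (k + (m + 1))))
  | 0 => by simpa using (P.integ_abs_sub_self _).le
  | j + 1 => by
    have hstep : P.integ (P.abs (P.sub (psum P a (m + j + 1)) (psum P a m))) ≤
        P.integ (P.abs (P.sub (psum P a (m + j)) (psum P a m))) +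
          P.integ (P.abs (a (m + j + 1))) :=
      P.integ_abs_le_add_of_eq fun x hx hj _ => by
        rw [P.mem_dom_sub] at hx hj
        have hx' := P.mem_dom_add.1 hx.1
        rw [P.f_sub hx.1 hx.2, P.f_sub hj.1 hj.2, psum, P.f_add _ _ x hx']
        ring
    rw [Finset.sum_range_succ, show j + (m + 1) = m + j + 1 by ring, ← add_assoc m j 1]
    linarith [integ_abs_sub_psum_add_le a m j]

lemma integ_abs_sub_psum_le_absTail {a : ℕ → I} (ha : Summable fun k => P.integ (P.abs (a k)))
    {m n : ℕ} (hmn : m ≤ n) :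
    P.integ (P.abs (P.sub (psum P a n) (psum P a m))) ≤ P.absTail a (m + 1) := by
  obtain ⟨j, rfl⟩ := Nat.exists_eq_add_of_le hmn
  exact (P.integ_abs_sub_psum_add_le a m j).trans <| Summable.sum_le_tsum _
    (fun _ _ => P.integ_abs_nonneg _) ((summable_nat_add_iff _).2 ha)

lemma exists_norm1Is {a : ℕ → I} (ha : Summable fun k => P.integ (P.abs (a k))) :
    ∃ L, Norm1Is P a L := by
  refine cauchySeq_tendsto_of_complete <|
    cauchySeq_of_dist_le_of_summable (fun n => P.integ (P.abs (a (n + 1)))) (fun n => ?_)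
      ((summable_nat_add_iff 1).2 ha)
  rw [Real.dist_eq, abs_sub_comm]
  refine (P.abs_integ_abs_sub_integ_abs_le _ _).trans ?_
  simpa using P.integ_abs_sub_psum_add_le a n 1

lemma norm1Is_nonneg {a : ℕ → I} {L : ℝ} (h : Norm1Is P a L) : 0 ≤ L :=
  ge_of_tendsto' h fun _ => P.integ_abs_nonneg _

lemma tendsto_integ_abs_sub_psum {a b : ℕ → I} {L : ℝ} (h : Norm1Is P (subSeq P a b) L) :
    Tendsto (fun K => P.integ (P.abs (P.sub (psum P a K) (psum P b K)))) atTop (𝓝 L) := by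
  simp only [← psum_subSeq]
  exact h.comp (tendsto_atTop_mono (fun K => show K ≤ 2 * K + 1 by omega) tendsto_id)

lemma integ_abs_sub_psum_psum_le {a b : ℕ → I} {L : ℝ}
    (ha : Summable fun k => P.integ (P.abs (a k))) (hb : Summable fun k => P.integ (P.abs (b k)))
    (hL : Norm1Is P (subSeq P a b) L) (m n : ℕ) :
    P.integ (P.abs (P.sub (psum P a m) (psum P b n))) ≤
      L + P.absTail a (m + 1) + P.absTail b (n + 1) := by
  have hbound : ∀ H, max m n ≤ H → P.integ (P.abs (P.sub (psum P a m) (psum P b n))) ≤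
      P.integ (P.abs (P.sub (psum P a H) (psum P b H))) +
        (P.absTail a (m + 1) + P.absTail b (n + 1)) := fun H hH =>
    calc _ ≤ P.integ (P.abs (P.sub (psum P a H) (psum P b H))) + P.integ (P.abs
          (P.sub (P.sub (psum P b H) (psum P b n)) (P.sub (psum P a H) (psum P a m)))) :=
          P.integ_abs_le_add_of_eq fun x hx hH hr => by
            simp only [P.mem_dom_sub] at hx hH hr
            rw [P.f_sub hx.1 hx.2, P.f_sub hH.1 hH.2, P.f_sub (P.mem_dom_sub.2 hr.1)
              (P.mem_dom_sub.2 hr.2), P.f_sub hr.1.1 hr.1.2, P.f_sub hr.2.1 hr.2.2]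
            ring
      _ ≤ P.integ (P.abs (P.sub (psum P a H) (psum P b H))) +
          (P.integ (P.abs (P.sub (psum P b H) (psum P b n))) +
            P.integ (P.abs (P.sub (psum P a H) (psum P a m)))) :=
          add_le_add_right (P.integ_abs_sub_le _ _) _
      _ ≤ _ := by
          grw [P.integ_abs_sub_psum_le_absTail hb (le_of_max_le_right hH),
            P.integ_abs_sub_psum_le_absTail ha (le_of_max_le_left hH), add_comm (P.absTail b _)]
  rw [add_assoc]
  exact le_of_tendsto_of_tendsto tendsto_const_nhds
    ((P.tendsto_integ_abs_sub_psum hL).add_const _) (eventually_atTop.2 ⟨max m n, hbound⟩)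

def telescope (S : ℕ → I) : ℕ → I
  | 0 => S 0
  | p + 1 => P.sub (S (p + 1)) (S p)

lemma f_psum_telescope (S : ℕ → I) : ∀ {K : ℕ} {x : X}, x ∈ P.dom (psum P (P.telescope S) K) →
    x ∈ P.dom (S K) ∧ P.f (psum P (P.telescope S) K) x = P.f (S K) x
  | 0, _, hx => ⟨hx, rfl⟩
  | K + 1, x, hx => by
    rw [psum, P.mem_dom_add] at hx
    obtain ⟨hSK, hfK⟩ := f_psum_telescope S hx.1
    have hdiff : x ∈ P.dom (S (K + 1)) ∧ x ∈ P.dom (S K) := P.mem_dom_sub.1 hx.2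
    refine ⟨hdiff.1, ?_⟩
    rw [psum, P.f_add _ _ x hx, hfK, telescope, P.f_sub hdiff.1 hdiff.2]
    ring

lemma summable_integ_abs_telescope {G : ℕ → ℕ → I} {ν : ℕ → ℕ} {δ ε : ℕ → ℝ}
    (hG : ∀ p, Summable fun k => P.integ (P.abs (G p k)))
    (hδ : ∀ p, Norm1Is P (subSeq P (G (p + 1)) (G p)) (δ p)) (hδε : ∀ p, δ p ≤ ε p)
    (hν : ∀ p, P.absTail (G p) (ν p + 1) ≤ ε p) (hε : Summable ε) :
    Summable fun p => P.integ (P.abs (P.telescope (fun p => psum P (G p) (ν p)) p)) := by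
  refine (summable_nat_add_iff 1).1 <| Summable.of_nonneg_of_le (fun _ => P.integ_abs_nonneg _)
    (fun p => ?_) ((hε.add ((summable_nat_add_iff 1).2 hε)).add hε)
  calc _ ≤ δ p + P.absTail (G (p + 1)) (ν (p + 1) + 1) + P.absTail (G p) (ν p + 1) :=
        P.integ_abs_sub_psum_psum_le (hG _) (hG _) (hδ p) _ _
    _ ≤ ε p + ε (p + 1) + ε p := by linarith [hδε p, hν p, hν (p + 1)]

lemma norm1Is_sub_telescope_le {G : ℕ → ℕ → I} {ν : ℕ → ℕ} {b : ℕ → I} {δ η : ℕ → ℝ}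
    {ε r : ℝ} {q : ℕ} (hG : ∀ p, Summable fun k => P.integ (P.abs (G p k)))
    (hb : Summable fun k => P.integ (P.abs (b k)))
    (hν : ∀ p, P.absTail (G p) (ν p + 1) ≤ η p) (hη : Tendsto η atTop (𝓝 0))
    (hδ : ∀ p, Norm1Is P (subSeq P (G p) b) (δ p)) (hδε : ∀ p ≥ q, δ p ≤ ε)
    (hr : Norm1Is P (subSeq P (P.telescope fun p => psum P (G p) (ν p)) b) r) : r ≤ ε := by
  have hbound : ∀ K ≥ q, P.integ (P.abs (P.sub (psum P (P.telescope fun p => psum P (G p) (ν p)) K)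
      (psum P b K))) ≤ ε + η K + P.absTail b (K + 1) := fun K hK =>
    calc _ ≤ P.integ (P.abs (P.sub (psum P (G K) (ν K)) (psum P b K))) :=
          P.integ_abs_le_of_eq fun x hx _ => by
            rw [P.mem_dom_sub] at hx
            obtain ⟨hS, hf⟩ := P.f_psum_telescope _ hx.1
            rw [P.f_sub hx.1 hx.2, P.f_sub hS hx.2, hf]
      _ ≤ δ K + P.absTail (G K) (ν K + 1) + P.absTail b (K + 1) :=
          P.integ_abs_sub_psum_psum_le (hG K) hb (hδ K) _ _
      _ ≤ _ := by linarith [hδε K hK, hν K]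
  have hlim : Tendsto (fun K => ε + η K + P.absTail b (K + 1)) atTop (𝓝 (ε + 0 + 0)) :=
    (tendsto_const_nhds.add hη).add ((P.tendsto_absTail b).comp (tendsto_add_atTop_nat 1))
  simpa using le_of_tendsto_of_tendsto (P.tendsto_integ_abs_sub_psum hr) hlim
    (eventually_atTop.2 ⟨q, hbound⟩)

end PreIntegrationSpace

/-- Completeness of `I₁` with respect to the `1`-norm: every Cauchy sequence
`Γ : ℕ → I₁` with a strictly increasing modulus `M` (so that
`∫|Γ(n) − Γ(m)| ≤ 2^{-p}` for `n, m ≥ M(p)`) converges in `1`-norm to some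
`α ∈ I₁`, with an explicit modulus of convergence. -/
theorem I1_complete (P : PreIntegrationSpace X I)
    (Γ : ℕ → ℕ → I) (M : ℕ → ℕ) (d : ℕ → ℕ → ℝ)
    (hΓ : ∀ n, InI1 P (Γ n))
    (hM : StrictMono M)
    (hd : ∀ n m, Norm1Is P (subSeq P (Γ n) (Γ m)) (d n m))
    (hcauchy : ∀ p n m, M p ≤ n → M p ≤ m → d n m ≤ (1 / 2) ^ p) :
    ∃ α : ℕ → I, InI1 P α ∧
      ∃ r : ℕ → ℝ,
        (∀ n, Norm1Is P (subSeq P α (Γ n)) (r n)) ∧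
        Tendsto r atTop (𝓝 0) ∧
        ∃ M'' : ℕ → ℕ, ∀ p n, M'' p ≤ n → r n ≤ (1 / 2) ^ p := by
  have hΓs n : Summable fun k => P.integ (P.abs (Γ n k)) := P.inI1_iff_summable.1 (hΓ n)
  have hν p : ∃ N, P.absTail (Γ (M p)) (N + 1) ≤ (1 / 2) ^ p :=
    (((P.tendsto_absTail _).comp (tendsto_add_atTop_nat 1)).eventually
      (ge_mem_nhds (by positivity))).exists
  choose ν hν using hν
  set α := P.telescope fun p => psum P (Γ (M p)) (ν p)
  have hα : Summable fun k => P.integ (P.abs (α k)) :=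
    P.summable_integ_abs_telescope (fun _ => hΓs _) (fun _ => hd _ _)
      (fun p => hcauchy p _ _ (hM.monotone p.le_succ) le_rfl) hν summable_geometric_two
  choose r hr using fun n => P.exists_norm1Is (P.summable_subSeq hα (hΓs n))
  have hr_le q n (hn : M q ≤ n) : r n ≤ (1 / 2) ^ q :=
    P.norm1Is_sub_telescope_le (fun _ => hΓs _) (hΓs n) hν
      (tendsto_pow_atTop_nhds_zero_of_lt_one (by norm_num) (by norm_num)) (fun _ => hd _ _)
      (fun _ hp => hcauchy q _ _ (hM.monotone hp) hn) (hr n)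
  refine ⟨α, P.inI1_iff_summable.2 hα, r, hr, tendsto_order.2 ⟨fun a ha => ?_, fun ε hε => ?_⟩,
    M, hr_le⟩
  · exact .of_forall fun n => ha.trans_le (P.norm1Is_nonneg (hr n))
  · obtain ⟨q, hq⟩ := exists_pow_lt_of_lt_one hε (by norm_num : (1 : ℝ) / 2 < 1)
    exact eventually_atTop.2 ⟨M q, fun n hn => (hr_le q n hn).trans_lt hq⟩
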